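/- arXiv:2005.07880 — 2 statements merged into one kernel-verified Lean document; each statement's English description precedes it below -/
import Mathlib

section
/- Let w : L → ℝ be a weight function with w(ℓ) ≠ 0 for every ℓ ∈ L, define g(P) = Σ_{ℓ ∈ E(P)} w(ℓ) for each P ⊆ P_m, and suppose no two distinct links have identical columns of the routing matrix (for all ℓ ≠ ℓ' there is p with r(p,ℓ) ≠ r(p,ℓ')). Then the map sending a link ℓ to the set {p ∈ P_m : r(p,ℓ) = 1} is a bijection from L onto the collection {P ⊆ P_m : g(P) ≠ 0}; in particular, the matrix whose columns are the indicator vectors of the sets P with g(P) ≠ 0 equals the routing matrix up to a permutation of columns. -/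
/-! Each link lies in exactly one exact link set, namely that of the paths traversing it; so
with distinct columns `E(P)` is a singleton `{ℓ}` when `P` is the path set of `ℓ` and empty
otherwise, and the nonzero weights make `g(P) = w ℓ` resp. `0`. -/

open Finset

/-- The exact link set `E(P)`: links traversed by every path in `P` and by no path outside `P`. -/
def exactLinks {ι Λ : Type*} [Fintype ι] [Fintype Λ] [DecidableEq ι] (r : ι → Λ → Bool)
    (P : Finset ι) : Finset Λ :=
  Finset.univ.filter (fun ℓ => (∀ p ∈ P, r p ℓ = true) ∧ (∀ p ∉ P, r p ℓ = false))

section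

variable {ι Λ : Type*} [Fintype ι] (r : ι → Λ → Bool)

theorem mem_exactLinks_iff [Fintype Λ] [DecidableEq ι] {P : Finset ι} {ℓ : Λ} :
    ℓ ∈ exactLinks r P ↔ univ.filter (fun p => r p ℓ = true) = P := by
  simp only [exactLinks, mem_filter, mem_univ, true_and, Finset.ext_iff]
  constructor
  · rintro ⟨hin, hout⟩ p
    by_cases hp : p ∈ P
    · simp [hp, hin p hp]
    · simp [hp, hout p hp]
  · intro h
    exact ⟨fun p hp => (h p).2 hp, fun p hp => by simpa using mt (h p).1 hp⟩

theorem injective_filter_of_distinct_columns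
    (hdist : ∀ ℓ ℓ' : Λ, ℓ ≠ ℓ' → ∃ p : ι, r p ℓ ≠ r p ℓ') :
    Function.Injective (fun ℓ : Λ => univ.filter (fun p : ι => r p ℓ = true)) := by
  intro ℓ ℓ' h
  by_contra hne
  obtain ⟨p, hp⟩ := hdist ℓ ℓ' hne
  have hmem : r p ℓ = true ↔ r p ℓ' = true := by
    simpa using Finset.ext_iff.mp h p
  exact hp (Bool.eq_iff_iff.mpr hmem)

theorem exactLinks_filter_eq_singleton [Fintype Λ] [DecidableEq ι]
    (hinj : Function.Injective (fun ℓ : Λ => univ.filter (fun p : ι => r p ℓ = true))) (ℓ : Λ) :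
    exactLinks r (univ.filter (fun p => r p ℓ = true)) = {ℓ} := by
  ext ℓ'
  rw [mem_exactLinks_iff, mem_singleton]
  exact hinj.eq_iff

end

/-- Under distinct columns and nowhere-zero weights, the map sending a link to the set
of paths traversing it is a bijection from the links onto the path sets with nonzero
exact weight sum. -/
theorem links_bijOn_support {ι Λ : Type*} [Fintype ι] [Fintype Λ]
    [DecidableEq ι] (r : ι → Λ → Bool) (w : Λ → ℝ)
    (hw : ∀ ℓ : Λ, w ℓ ≠ 0)
    (hdist : ∀ ℓ ℓ' : Λ, ℓ ≠ ℓ' → ∃ p : ι, r p ℓ ≠ r p ℓ') :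
    Set.BijOn (fun ℓ : Λ => Finset.univ.filter (fun p : ι => r p ℓ = true))
      Set.univ
      {P : Finset ι | (∑ ℓ ∈ exactLinks r P, w ℓ) ≠ 0} := by
  have hinj := injective_filter_of_distinct_columns r hdist
  refine ⟨fun ℓ _ => ?_, hinj.injOn, fun P hP => ?_⟩
  · simpa [exactLinks_filter_eq_singleton r hinj ℓ] using hw ℓ
  · obtain ⟨ℓ, hℓ⟩ : (exactLinks r P).Nonempty :=
      nonempty_of_sum_ne_zero hP
    exact ⟨ℓ, Set.mem_univ ℓ, (mem_exactLinks_iff r).mp hℓ⟩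
end

section
/- Let S be a finite set, let f, g be real-valued functions on subsets of S satisfying f(P) = Σ_{Q : P ⊆ Q ⊆ S} g(Q) for all P ⊆ S, let 𝓑 be a collection of subsets of S that is pairwise incomparable (no B, B' ∈ 𝓑 satisfy B ⊊ B'), and let s be a positive integer. Assume: (i) g(P) ≠ 0 only if P ⊆ B for some B ∈ 𝓑; and (ii) g(P) = 0 for every P with |P| > s and P ∉ 𝓑. Then for every subset P with P ⊆ B for some B ∈ 𝓑, such that |P| ≤ s and every B ∈ 𝓑 containing P satisfies |B| > s, one has g(P) = Σ_{Q : P ⊆ Q ⊆ S, |Q| ≤ s} (−1)^{|Q| − |P|} f(Q) − Σ_{B ∈ 𝓑 : B ⊇ P} (−1)^{s − |P|} C(|B| − |P| − 1, s − |P|) f(B), where C(·,·) denotes the binomial coefficient. -/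
/-!
Möbius inversion on the Boolean lattice gives `g P = ∑_{Q ⊇ P} (-1)^{|Q|-|P|} f Q`. On `𝓑`,
`f = g`, since `g` vanishes off the down-closure of the antichain `𝓑`; and for `|Q| > s` the
heuristic leaves only the members of `𝓑` above `Q` in `f Q = ∑_{T ⊇ Q} g T`. Hence the terms
with `|Q| > s` regroup as `∑_{B ∈ 𝓑, B ⊇ P} f B · ∑_{P ⊆ Q ⊆ B, |Q| > s} (-1)^{|Q|-|P|}`, and the
inner truncated alternating sum equals `-(-1)^{s-|P|} C(|B|-|P|-1, s-|P|)`.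
-/

open Finset

namespace Finset

variable {ι R : Type*} [DecidableEq ι] [CommRing R]

theorem alternating_sum_range_choose_filter_le {n k : ℕ} (h : k < n) :
    ∑ m ∈ range (n + 1) with m ≤ k, (-1 : R) ^ m * n.choose m = (-1) ^ k * (n - 1).choose k := by
  obtain ⟨n, rfl⟩ := Nat.exists_eq_add_of_lt h
  have hrange : {m ∈ range (k + n + 1 + 1) | m ≤ k} = range (k + 1) := by
    ext; simp only [mem_filter, mem_range]; omega
  rw [hrange]
  exact_mod_cast congrArg (Int.cast : ℤ → R) Int.alternating_sum_range_choose_eq_choose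

theorem sum_Icc_apply_card_sub {M : Type*} [AddCommMonoid M] {P B : Finset ι} (h : P ⊆ B)
    (F : ℕ → M) :
    ∑ Q ∈ Icc P B, F (#Q - #P) = ∑ m ∈ range (#B - #P + 1), (#B - #P).choose m • F m := by
  have disj {A : Finset ι} (hA : A ∈ (B \ P).powerset) : Disjoint P A :=
    disjoint_sdiff.mono_right (mem_powerset.1 hA)
  rw [Icc_eq_image_powerset h, sum_image, ← card_sdiff_of_subset h, ← sum_powerset_apply_card]
  · exact sum_congr rfl fun A hA => by rw [card_union_of_disjoint (disj hA), Nat.add_sub_cancel_left]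
  · intro A hA A' hA' hAA'
    simpa [union_sdiff_cancel_left (disj hA), union_sdiff_cancel_left (disj hA')] using
      congrArg (· \ P) hAA'

theorem sum_Icc_neg_one_pow_card_sub {P B : Finset ι} (h : P ⊆ B) :
    ∑ Q ∈ Icc P B, (-1 : R) ^ (#Q - #P) = if P = B then 1 else 0 := by
  have hPB : P = B ↔ #B - #P = 0 := by
    rw [Nat.sub_eq_zero_iff_le]
    exact ⟨fun h => h ▸ le_rfl, eq_of_subset_of_card_le h⟩
  rw [sum_Icc_apply_card_sub h, if_congr hPB rfl rfl]
  simp only [nsmul_eq_mul, mul_comm (Nat.cast _ : R)]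
  exact_mod_cast congrArg (Int.cast : ℤ → R) (Int.alternating_sum_range_choose (n := #B - #P))

theorem sum_Icc_filter_card_le_neg_one_pow_card_sub {P B : Finset ι} {s : ℕ} (h : P ⊆ B)
    (hP : #P ≤ s) (hB : s < #B) :
    ∑ Q ∈ Icc P B with #Q ≤ s, (-1 : R) ^ (#Q - #P)
      = (-1) ^ (s - #P) * (#B - #P - 1).choose (s - #P) := by
  have hcard : ∀ Q ∈ Icc P B, (#Q ≤ s ↔ #Q - #P ≤ s - #P) := fun Q hQ => by
    have := card_le_card (mem_Icc.1 hQ).1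
    omega
  rw [filter_congr hcard, sum_filter,
    sum_Icc_apply_card_sub h (fun m => if m ≤ s - #P then (-1 : R) ^ m else 0)]
  simp only [smul_ite, smul_zero, nsmul_eq_mul, mul_comm (Nat.cast _ : R)]
  rw [← sum_filter, alternating_sum_range_choose_filter_le (by omega)]

theorem sum_Icc_filter_lt_card_neg_one_pow_card_sub {P B : Finset ι} {s : ℕ} (h : P ⊆ B)
    (hP : #P ≤ s) (hB : s < #B) :
    ∑ Q ∈ Icc P B with s < #Q, (-1 : R) ^ (#Q - #P)
      = -((-1) ^ (s - #P) * (#B - #P - 1).choose (s - #P)) := by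
  have hne : P ≠ B := by rintro rfl; omega
  have hsplit := sum_filter_add_sum_filter_not (Icc P B) (#· ≤ s) fun Q => (-1 : R) ^ (#Q - #P)
  simp only [sum_Icc_neg_one_pow_card_sub h, if_neg hne, not_le,
    sum_Icc_filter_card_le_neg_one_pow_card_sub h hP hB] at hsplit
  exact eq_neg_of_add_eq_zero_right hsplit

variable [Fintype ι]

theorem moebius_inversion_superset {f g : Finset ι → R}
    (hfg : ∀ P, f P = ∑ Q with P ⊆ Q, g Q) (P : Finset ι) :
    g P = ∑ Q with P ⊆ Q, (-1) ^ (#Q - #P) * f Q := by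
  calc g P = ∑ T with P ⊆ T, (∑ Q ∈ Icc P T, (-1 : R) ^ (#Q - #P)) * g T := by
        rw [sum_congr rfl fun T hT => by rw [sum_Icc_neg_one_pow_card_sub (mem_filter.1 hT).2]]
        simp
    _ = ∑ Q with P ⊆ Q, (-1) ^ (#Q - #P) * f Q := by
        simp_rw [hfg, mul_sum, sum_mul]
        refine sum_comm' fun T Q => ?_
        simp only [mem_filter, mem_univ, true_and, mem_Icc]
        exact ⟨fun ⟨_, hPQ, hQT⟩ => ⟨hQT, hPQ⟩, fun ⟨hQT, hPQ⟩ => ⟨hPQ.trans hQT, hPQ, hQT⟩⟩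

section Sparse

variable {f g : Finset ι → R} {𝓑 : Finset (Finset ι)} {s : ℕ}

theorem apply_eq_of_mem_antichain (hfg : ∀ P, f P = ∑ Q with P ⊆ Q, g Q)
    (hmax : ∀ B ∈ 𝓑, ∀ B' ∈ 𝓑, ¬ B ⊂ B') (hsupp : ∀ P, g P ≠ 0 → ∃ B ∈ 𝓑, P ⊆ B)
    {B : Finset ι} (hB : B ∈ 𝓑) :
    f B = g B := by
  rw [hfg, sum_eq_single_of_mem B (by simp)]
  intro T hT hTB
  by_contra hgT
  obtain ⟨B', hB', hTB'⟩ := hsupp T hgT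
  exact hmax B hB B' hB' ((ssubset_of_subset_of_ne (mem_filter.1 hT).2 hTB.symm).trans_subset hTB')

theorem apply_eq_sum_antichain_of_lt_card (hfg : ∀ P, f P = ∑ Q with P ⊆ Q, g Q)
    (hmax : ∀ B ∈ 𝓑, ∀ B' ∈ 𝓑, ¬ B ⊂ B') (hsupp : ∀ P, g P ≠ 0 → ∃ B ∈ 𝓑, P ⊆ B)
    (hheur : ∀ P, s < #P → P ∉ 𝓑 → g P = 0) {Q : Finset ι} (hQ : s < #Q) :
    f Q = ∑ B ∈ 𝓑 with Q ⊆ B, f B := by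
  rw [hfg, sum_congr rfl fun B hB => apply_eq_of_mem_antichain hfg hmax hsupp (mem_filter.1 hB).1]
  symm
  refine sum_subset (fun B hB => by simpa using (mem_filter.1 hB).2) fun T hT hT𝓑 => ?_
  have hQT := (mem_filter.1 hT).2
  exact hheur T (hQ.trans_le (card_le_card hQT)) fun h => hT𝓑 (mem_filter.2 ⟨h, hQT⟩)

theorem sum_lt_card_neg_one_pow_mul_eq (hf : ∀ Q, s < #Q → f Q = ∑ B ∈ 𝓑 with Q ⊆ B, f B)
    {P : Finset ι} (hP : #P ≤ s) (hbig : ∀ B ∈ 𝓑, P ⊆ B → s < #B) :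
    ∑ Q with P ⊆ Q ∧ s < #Q, (-1) ^ (#Q - #P) * f Q
      = -∑ B ∈ 𝓑 with P ⊆ B, (-1) ^ (s - #P) * ((#B - #P - 1).choose (s - #P) : R) * f B := by
  calc ∑ Q with P ⊆ Q ∧ s < #Q, (-1) ^ (#Q - #P) * f Q
      = ∑ B ∈ 𝓑 with P ⊆ B, (∑ Q ∈ Icc P B with s < #Q, (-1 : R) ^ (#Q - #P)) * f B := by
        rw [sum_congr rfl fun Q hQ => by rw [hf Q (mem_filter.1 hQ).2.2]]
        simp_rw [mul_sum, sum_mul]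
        refine sum_comm' fun Q B => ?_
        simp only [mem_filter, mem_univ, true_and, mem_Icc]
        exact ⟨fun ⟨⟨hPQ, hQ⟩, hB, hQB⟩ => ⟨⟨⟨hPQ, hQB⟩, hQ⟩, hB, hPQ.trans hQB⟩,
          fun ⟨⟨⟨hPQ, hQB⟩, hQ⟩, hB, _⟩ => ⟨⟨hPQ, hQ⟩, hB, hQB⟩⟩
    _ = _ := by
        rw [← sum_neg_distrib]
        refine sum_congr rfl fun B hB => ?_
        obtain ⟨hB𝓑, hPB⟩ := mem_filter.1 hB
        rw [sum_Icc_filter_lt_card_neg_one_pow_card_sub hPB hP (hbig B hB𝓑 hPB), neg_mul]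

end Sparse

end Finset

theorem sparse_mobius_inversion_general {ι : Type*} [Fintype ι] [DecidableEq ι]
    (f g : Finset ι → ℝ) (𝓑 : Finset (Finset ι)) (s : ℕ)
    (hfg : ∀ P : Finset ι, f P = ∑ Q ∈ Finset.univ.filter (fun Q => P ⊆ Q), g Q)
    (hmax : ∀ B ∈ 𝓑, ∀ B' ∈ 𝓑, ¬ B ⊂ B')
    (hsupp : ∀ P : Finset ι, g P ≠ 0 → ∃ B ∈ 𝓑, P ⊆ B)
    (hheur : ∀ P : Finset ι, s < P.card → P ∉ 𝓑 → g P = 0) :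
    ∀ P : Finset ι, (∃ B ∈ 𝓑, P ⊆ B) → P.card ≤ s →
      (∀ B ∈ 𝓑, P ⊆ B → s < B.card) →
      g P = (∑ Q ∈ Finset.univ.filter (fun Q => P ⊆ Q ∧ Q.card ≤ s),
              (-1 : ℝ) ^ (Q.card - P.card) * f Q)
            - ∑ B ∈ 𝓑.filter (fun B => P ⊆ B),
              (-1 : ℝ) ^ (s - P.card) * ((B.card - P.card - 1).choose (s - P.card)) * f B := by
  intro P _ hP hbig
  have hsplit := sum_filter_add_sum_filter_not {Q | P ⊆ Q} (#· ≤ s)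
    fun Q => (-1 : ℝ) ^ (#Q - #P) * f Q
  simp only [filter_filter, not_le] at hsplit
  rw [moebius_inversion_superset hfg P, ← hsplit, sum_lt_card_neg_one_pow_mul_eq
    (fun Q => apply_eq_sum_antichain_of_lt_card hfg hmax hsupp hheur) hP hbig, sub_eq_add_neg]

/-- Elimination of large, non-maximal path sets: the modified Möbius inversion
formula under the sparsity heuristic. -/
theorem sparse_mobius_inversion {ι : Type*} [Fintype ι] [DecidableEq ι]
    (f g : Finset ι → ℝ) (𝓑 : Finset (Finset ι)) (s : ℕ) (hs : 0 < s)
    (hfg : ∀ P : Finset ι, f P = ∑ Q ∈ Finset.univ.filter (fun Q => P ⊆ Q), g Q)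
    (hmax : ∀ B ∈ 𝓑, ∀ B' ∈ 𝓑, ¬ B ⊂ B')
    (hsupp : ∀ P : Finset ι, g P ≠ 0 → ∃ B ∈ 𝓑, P ⊆ B)
    (hheur : ∀ P : Finset ι, s < P.card → P ∉ 𝓑 → g P = 0) :
    ∀ P : Finset ι, (∃ B ∈ 𝓑, P ⊆ B) → P.card ≤ s →
      (∀ B ∈ 𝓑, P ⊆ B → s < B.card) →
      g P = (∑ Q ∈ Finset.univ.filter (fun Q => P ⊆ Q ∧ Q.card ≤ s),
              (-1 : ℝ) ^ (Q.card - P.card) * f Q)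
            - ∑ B ∈ 𝓑.filter (fun B => P ⊆ B),
              (-1 : ℝ) ^ (s - P.card) * ((B.card - P.card - 1).choose (s - P.card)) * f B :=
  sparse_mobius_inversion_general f g 𝓑 s hfg hmax hsupp hheur
end
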